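/- Let L be a co-Heyting algebra and d a natural number. If dL = { x ∈ L | x ≤ e_d } and (d+1)L = { x ∈ L | x ≤ e_{d+1} } for elements e_d, e_{d+1} ∈ L, then e_{d+1} ≪ e_d, i.e. for every c ∈ L, e_d ≤ e_{d+1} ⊔ c implies e_d ≤ c. -/

import Mathlib

/-- A prime filter of a bounded lattice: upward closed, closed under `⊓`,
contains `⊤`, does not contain `⊥`, and prime with respect to `⊔`. -/
def IsPrimeFilter {L : Type*} [Lattice L] [BoundedOrder L] (p : Set L) : Prop :=
  (∀ x ∈ p, ∀ y : L, x ≤ y → y ∈ p) ∧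
  (∀ x ∈ p, ∀ y ∈ p, x ⊓ y ∈ p) ∧
  (⊤ : L) ∈ p ∧ (⊥ : L) ∉ p ∧
  ∀ x y : L, x ⊔ y ∈ p → x ∈ p ∨ y ∈ p

/-- `dim a ≥ n`: there is a strictly increasing chain `p 0 ⊊ p 1 ⊊ ⋯ ⊊ p n`
of prime filters with `a ∈ p 0`. -/
def DimGE {L : Type*} [Lattice L] [BoundedOrder L] (a : L) (n : ℕ) : Prop :=
  ∃ p : Fin (n + 1) → Set L, (∀ i, IsPrimeFilter (p i)) ∧
    (∀ i j : Fin (n + 1), i < j → p i ⊂ p j) ∧ a ∈ p 0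

/-- `codim a ≥ n`: every prime filter `p` containing `a` admits a strictly
increasing chain `q n ⊊ ⋯ ⊊ q 1 ⊊ q 0 = p` of prime filters. -/
def CodimGE {L : Type*} [Lattice L] [BoundedOrder L] (a : L) (n : ℕ) : Prop :=
  ∀ p : Set L, IsPrimeFilter p → a ∈ p →
    ∃ q : Fin (n + 1) → Set L, (∀ i, IsPrimeFilter (q i)) ∧
      (∀ i j : Fin (n + 1), i < j → q j ⊂ q i) ∧ q 0 = p

/-- The strong order: `b ≪ a` iff for every `c`, `a ≤ b ⊔ c` implies `a ≤ c`. -/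
def StrongBelow {L : Type*} [Lattice L] (b a : L) : Prop :=
  ∀ c : L, a ≤ b ⊔ c → a ≤ c

/-!
For any `a`, the element `z = e \ a` cannot have codimension `≥ n + 1` unless it is `⊥`,
as soon as `e` bounds every element of codimension `≥ n`. Take a prime filter `r` minimal among
those containing `z`; since `z \ a = z`, minimality forces `a ∉ r`. Below `r` sits a prime filter
`t ⊊ r` of height `≥ n`; it misses `z` by minimality and `a` since `t ⊆ r`, hence misses
`e ≤ a ⊔ z`. But a prime filter of height `≥ n` contains an element of codimension `≥ n`, built
up along the chain as `u ⊓ (v \ u)`, whose codimension exceeds that of `v`; so `t` contains `e`.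
With `e = e_d` and `a = e_d \ e_{d+1}` this gives `e_d ≤ e_d \ e_{d+1}`, i.e. `e_{d+1} ≪ e_d`.
-/

open Order

def PrimeHeightGE {L : Type*} [Lattice L] [BoundedOrder L] (p : Set L) (n : ℕ) : Prop :=
  ∃ q : Fin (n + 1) → Set L, (∀ i, IsPrimeFilter (q i)) ∧
    (∀ i j : Fin (n + 1), i < j → q j ⊂ q i) ∧ q 0 = p

section Lattice

variable {L : Type*} [Lattice L] [BoundedOrder L] {p t : Set L} {x y : L} {n : ℕ}

namespace IsPrimeFilter

theorem mem_of_le (hp : IsPrimeFilter p) (hx : x ∈ p) (hxy : x ≤ y) : y ∈ p :=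
  hp.1 x hx y hxy

theorem inf_mem (hp : IsPrimeFilter p) (hx : x ∈ p) (hy : y ∈ p) : x ⊓ y ∈ p :=
  hp.2.1 x hx y hy

theorem top_mem (hp : IsPrimeFilter p) : ⊤ ∈ p :=
  hp.2.2.1

theorem bot_notMem (hp : IsPrimeFilter p) : ⊥ ∉ p :=
  hp.2.2.2.1

theorem mem_or_mem (hp : IsPrimeFilter p) (h : x ⊔ y ∈ p) : x ∈ p ∨ y ∈ p :=
  hp.2.2.2.2 x y h

theorem sInter_of_isChain {C : Set (Set L)} (hC : ∀ r ∈ C, IsPrimeFilter r)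
    (hchain : IsChain (· ⊆ ·) C) (hne : C.Nonempty) : IsPrimeFilter (⋂₀ C) := by
  refine ⟨fun x hx y hxy r hr => (hC r hr).mem_of_le (hx r hr) hxy,
    fun x hx y hy r hr => (hC r hr).inf_mem (hx r hr) (hy r hr),
    fun r hr => (hC r hr).top_mem,
    fun h => hne.elim fun r hr => (hC r hr).bot_notMem (h r hr), fun x y hxy => ?_⟩
  by_contra! h
  obtain ⟨⟨r₁, hr₁, hx⟩, ⟨r₂, hr₂, hy⟩⟩ : (∃ r ∈ C, x ∉ r) ∧ ∃ r ∈ C, y ∉ r := by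
    simpa only [Set.mem_sInter, not_forall, exists_prop] using h
  rcases hchain.total hr₁ hr₂ with h₁₂ | h₂₁
  · exact ((hC r₁ hr₁).mem_or_mem (hxy r₁ hr₁)).elim hx fun hy₁ => hy (h₁₂ hy₁)
  · exact ((hC r₂ hr₂).mem_or_mem (hxy r₂ hr₂)).elim (fun hx₂ => hx (h₂₁ hx₂)) hy

theorem exists_minimal_mem {z : L} (hp : IsPrimeFilter p) (hz : z ∈ p) :
    ∃ r, Minimal (fun r => IsPrimeFilter r ∧ z ∈ r) r := by
  obtain ⟨r, -, hr⟩ := zorn_superset_nonempty {r | IsPrimeFilter r ∧ z ∈ r}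
    (fun C hC hchain hne => ⟨⋂₀ C,
      ⟨sInter_of_isChain (fun r hr => (hC hr).1) hchain hne, fun r hr => (hC hr).2⟩,
      fun _ => Set.sInter_subset_of_mem⟩) p ⟨hp, hz⟩
  exact ⟨r, hr⟩

end IsPrimeFilter

theorem primeHeightGE_zero (hp : IsPrimeFilter p) : PrimeHeightGE p 0 :=
  ⟨fun _ => p, fun _ => hp,
    fun i j hij => absurd hij (Fin.subsingleton_one.elim i j ▸ lt_irrefl i), rfl⟩

namespace PrimeHeightGE

theorem isPrimeFilter (h : PrimeHeightGE p n) : IsPrimeFilter p := by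
  obtain ⟨q, hq, -, rfl⟩ := h
  exact hq 0

theorem cons (hp : IsPrimeFilter p) (htp : t ⊂ p) (ht : PrimeHeightGE t n) :
    PrimeHeightGE p (n + 1) := by
  obtain ⟨q, hq, hanti, rfl⟩ := ht
  refine ⟨Fin.cons p q, Fin.cases hp hq, Fin.strictAnti_iff_succ_lt.mpr fun i => ?_, rfl⟩
  cases i using Fin.cases with
  | zero => exact htp
  | succ i => simpa [← Fin.succ_castSucc] using hanti _ _ (Fin.castSucc_lt_succ (i := i))

theorem exists_ssubset (h : PrimeHeightGE p (n + 1)) : ∃ t ⊂ p, PrimeHeightGE t n := by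
  obtain ⟨q, hq, hanti, rfl⟩ := h
  exact ⟨q 1, hanti 0 1 Fin.zero_lt_one,
    fun i => q i.succ, fun _ => hq _,
    fun _ _ hij => hanti _ _ (Fin.succ_lt_succ_iff.mpr hij), rfl⟩

end PrimeHeightGE

theorem CodimGE.primeHeightGE {a : L} (h : CodimGE a n) (hp : IsPrimeFilter p) (ha : a ∈ p) :
    PrimeHeightGE p n :=
  h p hp ha

theorem codimGE_zero (a : L) : CodimGE a 0 :=
  fun _ hp _ => primeHeightGE_zero hp

end Lattice

section DistribLattice

variable {L : Type*} [DistribLattice L] [BoundedOrder L] {p : Set L}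

theorem Order.Ideal.IsPrime.isPrimeFilter_compl {J : Ideal L} (hJ : J.IsPrime) :
    IsPrimeFilter (J : Set L)ᶜ :=
  ⟨fun _ hx _ hxy hy => hx (J.lower hxy hy),
    fun _ hx _ hy hxy => (hJ.mem_or_mem hxy).elim hx hy,
    hJ.toIsProper.top_notMem,
    fun h => h J.bot_mem,
    fun _ _ h => not_and_or.mp fun ⟨hx, hy⟩ => h (Ideal.sup_mem hx hy)⟩

theorem exists_isPrimeFilter_of_disjoint {F : PFilter L} {I : Ideal L}
    (h : Disjoint (F : Set L) I) :
    ∃ s, IsPrimeFilter s ∧ (F : Set L) ⊆ s ∧ Disjoint s (I : Set L) := by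
  obtain ⟨J, hJ, hIJ, hFJ⟩ := DistribLattice.prime_ideal_of_disjoint_filter_ideal h
  exact ⟨_, hJ.isPrimeFilter_compl, hFJ.subset_compl_right,
    Set.disjoint_compl_left_iff_subset.mpr hIJ⟩

theorem exists_isPrimeFilter_mem {z : L} (hz : z ≠ ⊥) : ∃ p, IsPrimeFilter p ∧ z ∈ p := by
  obtain ⟨p, hp, hzp, -⟩ := exists_isPrimeFilter_of_disjoint (F := PFilter.principal z)
    (I := Ideal.principal ⊥) (Set.disjoint_left.mpr fun x (hzx : z ≤ x) (hx : x ≤ ⊥) =>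
      hz (le_bot_iff.mp (hzx.trans hx)))
  exact ⟨p, hp, hzp le_rfl⟩

def IsPrimeFilter.complIdeal (hp : IsPrimeFilter p) : Ideal L :=
  IsIdeal.toIdeal (I := pᶜ)
    { IsLowerSet := fun _ _ hyx hx hy => hx (hp.mem_of_le hy hyx)
      Nonempty := ⟨⊥, hp.bot_notMem⟩
      Directed := fun x hx y hy =>
        ⟨x ⊔ y, fun h => (hp.mem_or_mem h).elim hx hy, le_sup_left, le_sup_right⟩ }

end DistribLattice

section CoheytingAlgebra

variable {L : Type*} [CoheytingAlgebra L] {p : Set L} {n : ℕ}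

theorem IsPrimeFilter.exists_ssubset_mem_of_sdiff_mem (hp : IsPrimeFilter p) {u v : L}
    (hu : u ∈ p) (hvu : v \ u ∈ p) : ∃ t, IsPrimeFilter t ∧ t ⊂ p ∧ v ∈ t := by
  obtain ⟨t, ht, hvt, htI⟩ := exists_isPrimeFilter_of_disjoint
    (F := PFilter.principal v) (I := hp.complIdeal ⊔ Ideal.principal u) <|
    Set.disjoint_left.mpr fun x (hvx : v ≤ x) hx => by
      obtain ⟨j, hj, hxj⟩ := (Lattice.mem_ideal_sup_principal u x _).mp hx
      exact hj (hp.mem_of_le hvu (sdiff_le_iff.mpr ((hvx.trans hxj).trans_eq (sup_comm j u))))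
  have htp : t ⊆ p := fun x hxt => by_contra fun hxp =>
    Set.disjoint_left.mp htI hxt (Ideal.mem_of_mem_of_le hxp le_sup_left)
  have hut : u ∉ t := fun hut =>
    Set.disjoint_left.mp htI hut (Ideal.mem_of_mem_of_le Ideal.mem_principal_self le_sup_right)
  exact ⟨t, ht, ⟨htp, fun hpt => hut (hpt hu)⟩, hvt le_rfl⟩

theorem Minimal.sdiff_notMem_of_isPrimeFilter {z a : L} {r : Set L}
    (hr : Minimal (fun r => IsPrimeFilter r ∧ z ∈ r) r) (ha : a ∈ r) : z \ a ∉ r := fun hza =>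
  let ⟨_, ht, htr, hzt⟩ := hr.prop.1.exists_ssubset_mem_of_sdiff_mem ha hza
  hr.not_prop_of_ssubset htr ⟨ht, hzt⟩

theorem CodimGE.inf_sdiff {v : L} (hv : CodimGE v n) (u : L) :
    CodimGE (u ⊓ (v \ u)) (n + 1) := by
  intro p hp hmem
  obtain ⟨t, ht, htp, hvt⟩ := hp.exists_ssubset_mem_of_sdiff_mem
    (hp.mem_of_le hmem inf_le_left) (hp.mem_of_le hmem inf_le_right)
  exact (hv.primeHeightGE ht hvt).cons hp htp

theorem PrimeHeightGE.exists_codimGE_mem (h : PrimeHeightGE p n) : ∃ v ∈ p, CodimGE v n := by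
  induction n generalizing p with
  | zero => exact ⟨⊤, h.isPrimeFilter.top_mem, codimGE_zero ⊤⟩
  | succ n ih =>
    obtain ⟨t, htp, ht⟩ := h.exists_ssubset
    obtain ⟨v, hvt, hv⟩ := ih ht
    obtain ⟨u, hup, hut⟩ := Set.exists_of_ssubset htp
    have hvu : v \ u ∈ t :=
      (ht.isPrimeFilter.mem_or_mem (ht.isPrimeFilter.mem_of_le hvt le_sup_sdiff)).resolve_left hut
    exact ⟨u ⊓ (v \ u), h.isPrimeFilter.inf_mem hup (htp.subset hvu), hv.inf_sdiff u⟩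

theorem sdiff_eq_bot_of_codimGE {e : L} (he : ∀ x, CodimGE x n → x ≤ e) (a : L)
    (h : CodimGE (e \ a) (n + 1)) : e \ a = ⊥ := by
  by_contra hz
  obtain ⟨p, hp, hzp⟩ := exists_isPrimeFilter_mem hz
  obtain ⟨r, hr⟩ := hp.exists_minimal_mem hzp
  obtain ⟨hrp, hzr⟩ := hr.prop
  have har : a ∉ r := fun har => hr.sdiff_notMem_of_isPrimeFilter har (by rwa [sdiff_idem])
  obtain ⟨t, htr, ht⟩ := (h.primeHeightGE hrp hzr).exists_ssubset
  have hzt : e \ a ∉ t := fun hzt => hr.not_prop_of_ssubset htr ⟨ht.isPrimeFilter, hzt⟩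
  obtain ⟨v, hvt, hv⟩ := ht.exists_codimGE_mem
  have het : e ∈ t := ht.isPrimeFilter.mem_of_le hvt (he v hv)
  rcases ht.isPrimeFilter.mem_or_mem (ht.isPrimeFilter.mem_of_le het le_sup_sdiff) with hat | hzt'
  · exact har (htr.subset hat)
  · exact hzt hzt'

end CoheytingAlgebra

theorem stmt9 {L : Type*} [CoheytingAlgebra L] (d : ℕ) (ed ed1 : L)
    (hd : {x : L | CodimGE x d} = {x : L | x ≤ ed})
    (hd1 : {x : L | CodimGE x (d + 1)} = {x : L | x ≤ ed1}) :
    StrongBelow ed1 ed := by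
  intro c hc
  have hbot : ed \ (ed \ ed1) = ⊥ :=
    sdiff_eq_bot_of_codimGE (fun x hx => hd.subset hx) _ (hd1.symm.subset sdiff_sdiff_le)
  exact (sdiff_eq_bot_iff.mp hbot).trans (sdiff_le_iff.mpr hc)
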